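/- arXiv:2201.12503 — 2 statements merged into one kernel-verified Lean document; each statement's English description precedes it below -/
import Mathlib

section
/- Let f ∈ ℍ[t] be a polynomial over the quaternions and let α ∈ ℍ be a non-real quaternion (α is not of the form r·1 with r ∈ ℝ). Then every element of the similarity class [α] is a right root of f if and only if f is divisible by the characteristic polynomial χ_α := t² − 2·Re(α)·t + ‖α‖², i.e. there exists q ∈ ℍ[t] with f = q·χ_α (here the real coefficients of χ_α are regarded as quaternions). -/
open Polynomial

/-- Right evaluation of a quaternionic polynomial `f` at `β`:
`evʳ_f(β) = Σ_k f_k β^k`, coefficients on the left. -/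
noncomputable def evalR (β : Quaternion ℝ) (f : Polynomial (Quaternion ℝ)) : Quaternion ℝ :=
  ∑ k ∈ Finset.range (f.natDegree + 1), f.coeff k * β ^ k

/-- The similarity class of a quaternion `α`: all `γ α γ⁻¹` with `γ ≠ 0`. -/
def simClass (α : Quaternion ℝ) : Set (Quaternion ℝ) :=
  {β | ∃ γ : Quaternion ℝ, γ ≠ 0 ∧ β = γ * α * γ⁻¹}

/-- The characteristic polynomial `χ_α = t² - 2 Re(α) t + ‖α‖²` of a quaternion `α`,
its real coefficients regarded as quaternions. -/
noncomputable def charPoly (α : Quaternion ℝ) : Polynomial (Quaternion ℝ) :=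
  X ^ 2 - C ((2 * α.re : ℝ) : Quaternion ℝ) * X + C ((‖α‖ ^ 2 : ℝ) : Quaternion ℝ)

/-!
The polynomial `χ_α` has real, hence central, coefficients. So `χ_α` commutes with every
`q ∈ ℍ[t]`, right evaluation is multiplicative on `q * χ_α`, and evaluating `χ_α` commutes with
conjugation: `χ_α(γαγ⁻¹) = γ χ_α(α) γ⁻¹ = 0`, because `α² - (α + ᾱ)α + αᾱ = 0`. This gives one
direction. Conversely, the remainder of `f` modulo the monic `χ_α` has degree at most one and
vanishes on `[α]`. A non-real `α` is not central, so `[α]` contains a second point, and a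
polynomial of degree at most one over a division ring with two distinct right roots is zero.
-/

section CentralCoefficients

variable {R A : Type*} [CommSemiring R] [Semiring A] [Algebra R A]

theorem Polynomial.commute_map_algebraMap (p : R[X]) (q : A[X]) :
    Commute (p.map (algebraMap R A)) q := by
  induction p using Polynomial.induction_on' with
  | add p p' hp hp' => rw [Polynomial.map_add]; exact hp.add_left hp'
  | monomial n r =>
    rw [map_monomial, ← C_mul_X_pow_eq_monomial, ← algebraMap_apply]
    exact (Algebra.commute_algebraMap_left r q).mul_left (commute_X_pow q n)

theorem Polynomial.eval_mul_map_algebraMap (q : A[X]) (p : R[X]) (x : A) :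
    (q * p.map (algebraMap R A)).eval x = q.eval x * aeval x p := by
  rw [← eval₂_id, eval₂_mul_noncomm _ _ fun k => ?_, eval₂_id, eval₂_id, eval_map_algebraMap]
  rw [coeff_map]
  exact Algebra.commute_algebraMap_left _ _

end CentralCoefficients

theorem Polynomial.aeval_conjugate {R A : Type*} [CommSemiring R] [DivisionRing A] [Algebra R A]
    (p : R[X]) {γ : A} (hγ : γ ≠ 0) (x : A) :
    aeval (γ * x * γ⁻¹) p = γ * aeval x p * γ⁻¹ := by
  have := aeval_algEquiv (MulSemiringAction.toAlgEquiv R A (ConjAct.toConjAct (Units.mk0 γ hγ))) x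
  simpa [ConjAct.units_smul_def] using congrArg (· p) this

theorem Polynomial.eq_zero_of_natDegree_le_one_of_eval_eq_zero {R : Type*} [Ring R]
    [NoZeroDivisors R] {r : R[X]} (hr : r.natDegree ≤ 1) {a b : R} (hab : a ≠ b) (ha : r.eval a = 0)
    (hb : r.eval b = 0) : r = 0 := by
  rw [eq_X_add_C_of_natDegree_le_one hr] at ha hb ⊢
  simp only [eval_add, eval_mul_X, eval_C] at ha hb
  have h1 : r.coeff 1 * (a - b) = 0 := by
    rw [mul_sub, sub_eq_zero]; exact add_right_cancel (ha.trans hb.symm)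
  have hc1 : r.coeff 1 = 0 := (mul_eq_zero.1 h1).resolve_right (sub_ne_zero.2 hab)
  have hc0 : r.coeff 0 = 0 := by simpa [hc1] using ha
  simp [hc0, hc1]

theorem Quaternion.exists_eq_coe_of_forall_commute {α : Quaternion ℝ}
    (h : ∀ γ : Quaternion ℝ, Commute γ α) : ∃ r : ℝ, α = r := by
  -- Name `i` and `j` first: the `Quaternion` multiplication lemmas do not fire on literals.
  obtain ⟨i, hi⟩ : ∃ i : Quaternion ℝ, i = ⟨0, 1, 0, 0⟩ := ⟨_, rfl⟩
  obtain ⟨j, hj⟩ : ∃ j : Quaternion ℝ, j = ⟨0, 0, 1, 0⟩ := ⟨_, rfl⟩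
  have hαi := Quaternion.ext_iff.1 (h i).eq
  have hαj := Quaternion.ext_iff.1 (h j).eq
  simp only [Quaternion.imI_mul, Quaternion.imJ_mul, Quaternion.imK_mul] at hαi hαj
  subst hi hj
  simp at hαi hαj
  exact ⟨α.re, by ext <;> simp <;> linarith⟩

theorem self_mem_simClass (α : Quaternion ℝ) : α ∈ simClass α :=
  ⟨1, one_ne_zero, by simp⟩

theorem exists_ne_mem_simClass {α : Quaternion ℝ} (hα : ¬∃ r : ℝ, α = r) :
    ∃ β ∈ simClass α, β ≠ α := by
  contrapose! hα
  refine Quaternion.exists_eq_coe_of_forall_commute fun γ => ?_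
  rcases eq_or_ne γ 0 with rfl | hγ
  · exact Commute.zero_left α
  · exact (mul_inv_eq_iff_eq_mul₀ hγ).1 (hα _ ⟨γ, hγ, rfl⟩)

theorem evalR_eq_eval (β : Quaternion ℝ) (f : Polynomial (Quaternion ℝ)) :
    evalR β f = f.eval β := by
  rw [eval_eq_sum_range]; rfl

noncomputable def realCharPoly (α : Quaternion ℝ) : ℝ[X] :=
  X ^ 2 - C (2 * α.re) * X + C (‖α‖ ^ 2)

theorem charPoly_eq_map (α : Quaternion ℝ) :
    charPoly α = (realCharPoly α).map (algebraMap ℝ (Quaternion ℝ)) := by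
  simp [charPoly, realCharPoly]

theorem aeval_self_realCharPoly (α : Quaternion ℝ) : aeval α (realCharPoly α) = 0 := by
  have hre : algebraMap ℝ (Quaternion ℝ) (2 * α.re) = α + star α :=
    (Quaternion.self_add_star' α).symm
  have hnorm : algebraMap ℝ (Quaternion ℝ) (‖α‖ ^ 2) = α * star α := by
    rw [Quaternion.self_mul_star, Quaternion.normSq_eq_norm_mul_self, sq]; rfl
  rw [realCharPoly, map_add, map_sub, map_mul, aeval_X_pow, aeval_C, aeval_C, aeval_X, hre, hnorm,
    add_mul, ← star_comm_self']
  noncomm_ring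

theorem commute_charPoly (α : Quaternion ℝ) (q : Polynomial (Quaternion ℝ)) :
    Commute (charPoly α) q :=
  charPoly_eq_map α ▸ commute_map_algebraMap _ q

theorem monic_charPoly (α : Quaternion ℝ) : (charPoly α).Monic := by
  unfold charPoly; monicity!

theorem natDegree_charPoly (α : Quaternion ℝ) : (charPoly α).natDegree = 2 := by
  unfold charPoly; compute_degree!

theorem eval_mul_charPoly_of_mem_simClass {α β : Quaternion ℝ} (hβ : β ∈ simClass α)
    (q : Polynomial (Quaternion ℝ)) : (q * charPoly α).eval β = 0 := by
  obtain ⟨γ, hγ, rfl⟩ := hβ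
  rw [charPoly_eq_map, eval_mul_map_algebraMap, aeval_conjugate _ hγ, aeval_self_realCharPoly,
    mul_zero, zero_mul, mul_zero]

theorem natDegree_modByMonic_charPoly_le (f : Polynomial (Quaternion ℝ)) (α : Quaternion ℝ) :
    (f %ₘ charPoly α).natDegree ≤ 1 := by
  have := natDegree_modByMonic_lt f (monic_charPoly α) fun h => by
    simpa [h] using natDegree_charPoly α
  rw [natDegree_charPoly] at this
  omega

/-- For a non-real quaternion `α`, the whole similarity class `[α]` consists of right
roots of `f` if and only if `f` is divisible by the characteristic polynomial `χ_α`. -/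
theorem class_roots_iff_charPoly_dvd (f : Polynomial (Quaternion ℝ)) (α : Quaternion ℝ)
    (hα : ¬∃ r : ℝ, α = (r : Quaternion ℝ)) :
    (∀ β ∈ simClass α, evalR β f = 0) ↔
      ∃ q : Polynomial (Quaternion ℝ), f = q * charPoly α := by
  simp only [evalR_eq_eval]
  constructor
  · intro hroots
    have hdiv : f = f /ₘ charPoly α * charPoly α + f %ₘ charPoly α := by
      rw [← (commute_charPoly α _).eq, add_comm, modByMonic_add_div]
    have hrem : ∀ β ∈ simClass α, (f %ₘ charPoly α).eval β = 0 := fun β hβ => by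
      have := hroots β hβ
      rwa [hdiv, eval_add, eval_mul_charPoly_of_mem_simClass hβ, zero_add] at this
    obtain ⟨β, hβ, hβα⟩ := exists_ne_mem_simClass hα
    have hzero := eq_zero_of_natDegree_le_one_of_eval_eq_zero
      (natDegree_modByMonic_charPoly_le f α) hβα (hrem β hβ) (hrem α (self_mem_simClass α))
    exact ⟨f /ₘ charPoly α, by rwa [hzero, add_zero] at hdiv⟩
  · rintro ⟨q, rfl⟩ β hβ
    exact eval_mul_charPoly_of_mem_simClass hβ q
end

section
/- Let n ∈ ℕ and z₁, …, zₙ ∈ ℂ, and let f := (1 + (z₁𝐣)t)·(1 + (z₂𝐣)t)·⋯·(1 + (zₙ𝐣)t) ∈ ℍ[t], the product taken in increasing order of the index. Let r ∈ ℝ[t] be the real polynomial whose coefficient of t^m is the real part of the coefficient of t^m in f. Then r = 1 + Σ_{k=1}^{⌊n/2⌋} (−1)^k·I_k·t^{2k}, where I_k := Σ_{1 ≤ i₁ < i₂ < ⋯ < i_{2k} ≤ n} Re( z_{i₁}·conj(z_{i₂})·z_{i₃}·conj(z_{i₄})·⋯·z_{i_{2k−1}}·conj(z_{i_{2k}}) ),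 the product and real part being taken in ℂ. -/
open Polynomial

/-- The quaternion `z𝐣 = x𝐣 + y𝐤` for a complex number `z = x + iy`. -/
def toQj (z : ℂ) : Quaternion ℝ := ⟨0, 0, z.re, z.im⟩

/-- For a list of indices `[i₁, …, i_m]`, the alternating product
`z_{i₁} · conj(z_{i₂}) · z_{i₃} · conj(z_{i₄}) ⋯` in `ℂ`. -/
noncomputable def altProd (z : ℕ → ℂ) (l : List ℕ) : ℂ :=
  (l.zipIdx.map fun p => if p.2 % 2 = 0 then z p.1 else (starRingEnd ℂ) (z p.1)).prod

/-- The recutting invariant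
`I_k = Σ_{1 ≤ i₁ < ⋯ < i_{2k} ≤ n} Re(z_{i₁} conj(z_{i₂}) ⋯ z_{i_{2k-1}} conj(z_{i_{2k}}))`. -/
noncomputable def recutInv (n : ℕ) (z : ℕ → ℂ) (k : ℕ) : ℝ :=
  ∑ s ∈ (Finset.Icc 1 n).powersetCard (2 * k), (altProd z (s.sort (· ≤ ·))).re

/-!
Since `𝐣 w = conj(w) 𝐣` and `𝐣² = -1`, a product `(z_{i₁}𝐣)(z_{i₂}𝐣)⋯(z_{i_m}𝐣)` with
`i₁ < ⋯ < i_m` equals `(-1)^⌊m/2⌋ z_{i₁} conj(z_{i₂}) z_{i₃} ⋯`, times `𝐣` when `m` is odd. Hence the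
coefficient of `t^m` in `f` is `(-1)^⌊m/2⌋` times the sum of these alternating products over
`m`-subsets of `{1, …, n}`: a complex number for even `m`, and a quaternion of the form `w𝐣`, with
zero real part, for odd `m`. This is proved by induction on `n`, multiplying by one factor on the
right, which appends the largest index to every subset.
-/

open Quaternion ComplexConjugate

theorem Finset.sort_insert_of_forall_le {α : Type*} [LinearOrder α] {s : Finset α} {a : α}
    (h₁ : ∀ b ∈ s, b ≤ a) (h₂ : a ∉ s) :
    (insert a s).sort (· ≤ ·) = s.sort (· ≤ ·) ++ [a] := by
  have hset : (s.sort (· ≤ ·) ++ [a]).toFinset = insert a s := by ext; simp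
  rw [← hset, List.toFinset_sort]
  · exact List.pairwise_append.2 ⟨Finset.pairwise_sort _ _, List.pairwise_singleton _ a,
      fun b hb a' ha' => List.eq_of_mem_singleton ha' ▸ h₁ b ((Finset.mem_sort _).1 hb)⟩
  · exact (Finset.sort_nodup _ _).append (List.nodup_singleton a)
      (List.disjoint_singleton.2 fun h => h₂ ((Finset.mem_sort _).1 h))

theorem Finset.sum_powersetCard_succ_insert {α β : Type*} [DecidableEq α] [AddCommMonoid β]
    {a : α} {s : Finset α} (ha : a ∉ s) (m : ℕ) (f : Finset α → β) :
    ∑ t ∈ (insert a s).powersetCard (m + 1), f t =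
      ∑ t ∈ s.powersetCard (m + 1), f t + ∑ t ∈ s.powersetCard m, f (insert a t) := by
  have not_mem {t} (ht : t ∈ s.powersetCard m) : a ∉ t :=
    fun h => ha ((Finset.mem_powersetCard.1 ht).1 h)
  rw [Finset.powersetCard_succ_insert ha, Finset.sum_union, Finset.sum_image]
  · intro t ht t' ht' h
    rw [← Finset.erase_insert (not_mem ht), h, Finset.erase_insert (not_mem ht')]
  · refine Finset.disjoint_left.2 fun t ht ht' => ?_
    obtain ⟨u, hu, rfl⟩ := Finset.mem_image.1 ht'
    exact ha ((Finset.mem_powersetCard.1 ht).1 (Finset.mem_insert_self a u))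

lemma re_toQj (w : ℂ) : (toQj w).re = 0 := rfl

lemma toQj_zero : toQj 0 = 0 := rfl

lemma toQj_add (v w : ℂ) : toQj (v + w) = toQj v + toQj w := by
  ext <;> simp only [Quaternion.re_add, Quaternion.imI_add, Quaternion.imJ_add,
    Quaternion.imK_add] <;> simp [toQj]

lemma coeComplex_mul_toQj (v w : ℂ) : (v : ℍ) * toQj w = toQj (v * w) := by
  ext <;> simp only [Quaternion.re_mul, Quaternion.imI_mul, Quaternion.imJ_mul,
    Quaternion.imK_mul] <;> simp [toQj]

lemma toQj_mul_toQj (v w : ℂ) : toQj v * toQj w = ((-(v * conj w) : ℂ) : ℍ) := by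
  ext <;> simp only [Quaternion.re_mul, Quaternion.imI_mul, Quaternion.imJ_mul,
    Quaternion.imK_mul] <;> simp [toQj] <;> ring

section EdgeProduct

variable (z : ℕ → ℂ)

lemma altProd_append_singleton (l : List ℕ) (a : ℕ) :
    altProd z (l ++ [a]) = altProd z l * if Even l.length then z a else conj (z a) := by
  simp [altProd, List.zipIdx_append, Nat.even_iff]

noncomputable def altSum (n m : ℕ) : ℂ :=
  ∑ s ∈ (Finset.Icc 1 n).powersetCard m, altProd z (s.sort (· ≤ ·))

lemma altSum_zero_right (n : ℕ) : altSum z n 0 = 1 := by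
  simp [altSum, altProd]

lemma altSum_of_lt {n m : ℕ} (h : n < m) : altSum z n m = 0 := by
  rw [altSum, Finset.powersetCard_eq_empty.2 (by simpa using h), Finset.sum_empty]

lemma re_altSum_two_mul (n k : ℕ) : (altSum z n (2 * k)).re = recutInv n z k :=
  Complex.re_sum _ _

lemma recutInv_zero_right (n : ℕ) : recutInv n z 0 = 1 := by
  rw [← re_altSum_two_mul, mul_zero, altSum_zero_right, Complex.one_re]

lemma recutInv_of_lt {n k : ℕ} (h : n < 2 * k) : recutInv n z k = 0 := by
  rw [← re_altSum_two_mul, altSum_of_lt z h, Complex.zero_re]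

lemma altSum_succ_succ (n m : ℕ) :
    altSum z (n + 1) (m + 1) =
      altSum z n (m + 1) + altSum z n m * if Even m then z (n + 1) else conj (z (n + 1)) := by
  have hnot : n + 1 ∉ Finset.Icc 1 n := by simp
  rw [altSum, ← Finset.insert_Icc_right_eq_Icc_add_one (by omega),
    Finset.sum_powersetCard_succ_insert hnot, altSum, altSum, Finset.sum_mul]
  congr 1
  refine Finset.sum_congr rfl fun s hs => ?_
  obtain ⟨hsub, hcard⟩ := Finset.mem_powersetCard.1 hs
  rw [Finset.sort_insert_of_forall_le (fun b hb => (Finset.mem_Icc.1 (hsub hb)).2.trans n.le_succ)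
    (fun h => hnot (hsub h)), altProd_append_singleton, Finset.length_sort, hcard]

noncomputable def edgeProduct (n : ℕ) : Polynomial ℍ :=
  ((List.range n).map fun k => 1 + C (toQj (z (k + 1))) * X).prod

theorem coeff_edgeProduct (n m : ℕ) :
    (edgeProduct z n).coeff m = if Even m then ↑((-1) ^ (m / 2) * altSum z n m)
      else toQj ((-1) ^ (m / 2) * altSum z n m) := by
  induction n generalizing m with
  | zero =>
    rcases m with _ | m
    · simp [edgeProduct, altSum_zero_right]
    · simp [edgeProduct, altSum_of_lt z m.succ_pos, toQj_zero, coeff_one]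
  | succ n ih =>
    rw [edgeProduct, List.range_succ, List.map_append, List.prod_append, List.map_singleton,
      List.prod_singleton, ← edgeProduct, mul_add, mul_one, coeff_add, ← mul_assoc]
    rcases m with _ | m
    · simp [ih, altSum_zero_right]
    rw [coeff_mul_X, coeff_mul_C, ih, ih, altSum_succ_succ]
    obtain ⟨k, rfl | rfl⟩ := Nat.even_or_odd' m
    · have hk : (2 * k + 1) / 2 = k := by omega
      simp only [Nat.even_add_one, even_two_mul, not_true_eq_false, if_true, if_false, hk,
        Nat.mul_div_cancel_left k two_pos, coeComplex_mul_toQj, ← toQj_add]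
      ring_nf
    · have hk : (2 * k + 1 + 1) / 2 = k + 1 := by omega
      have hk' : (2 * k + 1) / 2 = k := by omega
      simp only [Nat.even_add_one, even_two_mul, not_true_eq_false, not_false_eq_true, if_true,
        if_false, hk, hk', toQj_mul_toQj, ← Quaternion.coeComplex_add]
      ring_nf

lemma re_coeff_edgeProduct_two_mul (n j : ℕ) :
    ((edgeProduct z n).coeff (2 * j)).re = (-1) ^ j * recutInv n z j := by
  rw [coeff_edgeProduct, if_pos (even_two_mul j), Nat.mul_div_cancel_left j two_pos,
    Quaternion.re_coeComplex, ← re_altSum_two_mul, ← Complex.re_ofReal_mul]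
  norm_num

lemma re_coeff_edgeProduct_two_mul_add_one (n j : ℕ) :
    ((edgeProduct z n).coeff (2 * j + 1)).re = 0 := by
  rw [coeff_edgeProduct, if_neg (Nat.not_even_two_mul_add_one j), re_toQj]

end EdgeProduct

lemma coeff_sum_C_mul_X_pow_two_mul {R : Type*} [Semiring R] (s : Finset ℕ) (a : ℕ → R) (j : ℕ) :
    (∑ k ∈ s, C (a k) * X ^ (2 * k)).coeff (2 * j) = if j ∈ s then a j else 0 := by
  simp only [finsetSum_coeff, coeff_C_mul_X_pow, Nat.mul_left_cancel_iff two_pos,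
    Finset.sum_ite_eq]

lemma coeff_sum_C_mul_X_pow_two_mul_add_one {R : Type*} [Semiring R] (s : Finset ℕ)
    (a : ℕ → R) (j : ℕ) : (∑ k ∈ s, C (a k) * X ^ (2 * k)).coeff (2 * j + 1) = 0 := by
  simp only [finsetSum_coeff, coeff_C_mul_X_pow]
  exact Finset.sum_eq_zero fun k _ => if_neg (by omega)

/-- The real part of the polynomial `f = (1 + (z₁𝐣)t) ⋯ (1 + (zₙ𝐣)t)` is
`1 + Σ_{k=1}^{⌊n/2⌋} (-1)^k I_k t^{2k}`, where `I_k` are the recutting invariants. -/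
theorem re_part_of_edge_product (n : ℕ) (z : ℕ → ℂ)
    (r : Polynomial ℝ)
    (hr : ∀ m : ℕ,
      r.coeff m = ((((List.range n).map fun k => 1 + C (toQj (z (k + 1))) * X).prod).coeff m).re) :
    r = 1 + ∑ k ∈ Finset.Icc 1 (n / 2), C ((-1 : ℝ) ^ k * recutInv n z k) * X ^ (2 * k) := by
  ext m
  rw [hr, coeff_add, coeff_one]
  change ((edgeProduct z n).coeff m).re = _
  obtain ⟨j, rfl | rfl⟩ := Nat.even_or_odd' m
  · rw [re_coeff_edgeProduct_two_mul, coeff_sum_C_mul_X_pow_two_mul]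
    rcases Nat.eq_zero_or_pos j with rfl | hj
    · simp [recutInv_zero_right]
    by_cases hjn : 2 * j ≤ n
    · rw [if_neg (by omega), if_pos (Finset.mem_Icc.2 ⟨hj, by omega⟩), zero_add]
    · rw [if_neg (by omega), if_neg (by rw [Finset.mem_Icc]; omega), recutInv_of_lt z (by omega),
        mul_zero, add_zero]
  · rw [re_coeff_edgeProduct_two_mul_add_one, coeff_sum_C_mul_X_pow_two_mul_add_one,
      if_neg (by omega), add_zero]
end
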